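/- For every q ∈ [0,1], the function ϱ^{(q)}_{h,s}(x, α) = (x − sign(x)·q·c_q·α)·1_{|x| > c_q α} (with c_q = 2^{q−2}(2−q)^{2−q}/(1−q)^{1−q} for q < 1 and c_1 = 1/2) is a thresholding rule: there exists a constant C₁ > 0 (which may be chosen uniformly in q ∈ [0,1]) with |x − ϱ^{(q)}_{h,s}(x, α)| ≤ C₁ · min(|x|, α) for all α ≥ 0 and x ∈ ℝ, and ϱ^{(q)}_{h,s}(x, α) = 0 whenever |x| ≤ c_q α. -/
import Mathlib


noncomputable section

/-- The constant `c_q = 2^(q−2)·(2−q)^(2−q)/(1−q)^(1−q)`; note that with `rpow` conventions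
`(1-1)^(1-1) = 0^0 = 1`, so `cq 1 = 1/2`, the continuous extension. -/
def cq (q : ℝ) : ℝ := 2 ^ (q - 2) * (2 - q) ^ (2 - q) / (1 - q) ^ (1 - q)

/-- The interpolating rule `ϱ^{(q)}_{h,s}(x, β) = (x − sign(x)·q·c_q·β)·1_{|x| > c_q β}`. -/
def rhoHS (q x β : ℝ) : ℝ :=
  if cq q * β < |x| then x - Real.sign x * (q * cq q * β) else 0

lemma self_rpow_pos {t : ℝ} (ht : 0 ≤ t) : 0 < t ^ t := by
  rcases eq_or_lt_of_le ht with h | h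
  · rw [← h]; norm_num
  · exact Real.rpow_pos_of_pos h t

lemma self_rpow_ge {t : ℝ} (h0 : 0 ≤ t) : (1:ℝ)/3 ≤ t ^ t := by
  rcases eq_or_lt_of_le h0 with h | h
  · rw [← h]; norm_num
  · have hinv := Real.log_le_sub_one_of_pos (x := 1/t) (by positivity)
    have hlog1 : Real.log (1/t) = - Real.log t := by rw [one_div, Real.log_inv]
    have hlog : -1 ≤ t * Real.log t := by
      rw [hlog1] at hinv
      have := mul_le_mul_of_nonneg_left hinv h0
      have htne : t ≠ 0 := ne_of_gt h
      field_simp at this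
      nlinarith
    rw [Real.rpow_def_of_pos h, mul_comm]
    have h2 : Real.exp (-1) ≤ Real.exp (t * Real.log t) := Real.exp_le_exp.2 hlog
    refine le_trans ?_ h2
    rw [Real.exp_neg, one_div]
    have h3 : Real.exp 1 ≤ 3 := le_of_lt (lt_trans Real.exp_one_lt_d9 (by norm_num))
    exact inv_anti₀ (Real.exp_pos 1) h3

lemma cq_pos {q : ℝ} (hq : q ∈ Set.Icc (0:ℝ) 1) : 0 < cq q := by
  obtain ⟨h0, h1⟩ := hq
  have hb : (0:ℝ) < 2 - q := by linarith
  exact div_pos (mul_pos (Real.rpow_pos_of_pos two_pos _) (Real.rpow_pos_of_pos hb _))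
    (self_rpow_pos (by linarith))

lemma cq_le_six {q : ℝ} (hq : q ∈ Set.Icc (0:ℝ) 1) : cq q ≤ 6 := by
  obtain ⟨h0, h1⟩ := hq
  have hA1 : (2:ℝ) ^ (q - 2) ≤ 2 ^ (-1 : ℝ) :=
    Real.rpow_le_rpow_of_exponent_le one_le_two (by linarith)
  have hA1' : (2:ℝ) ^ (-1 : ℝ) = 1/2 := by
    rw [Real.rpow_neg_one]; norm_num
  have hA2a : (2 - q) ^ (2 - q) ≤ (2:ℝ) ^ (2 - q) :=
    Real.rpow_le_rpow (by linarith) (by linarith) (by linarith)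
  have hA2b : (2:ℝ) ^ (2 - q) ≤ (2:ℝ) ^ (2 : ℝ) :=
    Real.rpow_le_rpow_of_exponent_le one_le_two (by linarith)
  have hA2c : (2:ℝ) ^ (2 : ℝ) = 4 := by
    rw [show (2:ℝ) = ((2:ℕ):ℝ) from rfl, Real.rpow_natCast]; norm_num
  have hApos : (0:ℝ) ≤ (2:ℝ) ^ (q - 2) := (Real.rpow_pos_of_pos two_pos _).le
  have hBpos : (0:ℝ) ≤ (2 - q) ^ (2 - q) := (Real.rpow_pos_of_pos (by linarith) _).le
  have hnum : (2:ℝ) ^ (q - 2) * (2 - q) ^ (2 - q) ≤ 2 := by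
    have h2pos : (0:ℝ) ≤ (2:ℝ) ^ (-1 : ℝ) := (Real.rpow_pos_of_pos two_pos _).le
    have hm := mul_le_mul hA1 (le_trans hA2a hA2b) hBpos h2pos
    rw [hA2c, hA1'] at hm
    linarith
  have hden : (1:ℝ)/3 ≤ (1 - q) ^ (1 - q) := self_rpow_ge (by linarith)
  have hdpos : (0:ℝ) < (1 - q) ^ (1 - q) := self_rpow_pos (by linarith)
  rw [cq, div_le_iff₀ hdpos]
  nlinarith

theorem rhoHS_is_thresholding_rule :
    ∃ C₁ > (0 : ℝ), ∀ q ∈ Set.Icc (0 : ℝ) 1,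
      (∀ α : ℝ, 0 ≤ α → ∀ x : ℝ, |x - rhoHS q x α| ≤ C₁ * min |x| α) ∧
      (∀ α : ℝ, 0 ≤ α → ∀ x : ℝ, |x| ≤ cq q * α → rhoHS q x α = 0) := by
  refine ⟨6, by norm_num, fun q hq => ⟨?_, ?_⟩⟩
  · intro α hα x
    have hcpos := cq_pos hq
    have hc6 := cq_le_six hq
    obtain ⟨hq0, hq1⟩ := hq
    rw [rhoHS]
    split_ifs with h
    · have hsub : x - (x - Real.sign x * (q * cq q * α)) = Real.sign x * (q * cq q * α) := by
        ring
      rw [hsub, abs_mul]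
      have hsign : |Real.sign x| ≤ 1 := by
        rcases Real.sign_apply_eq x with h' | h' | h' <;> rw [h'] <;> norm_num
      have hnn : (0:ℝ) ≤ q * cq q * α := by positivity
      have habs : |q * cq q * α| = q * cq q * α := abs_of_nonneg hnn
      rw [habs]
      have hle : q * cq q * α ≤ cq q * α := by
        nlinarith [mul_nonneg (sub_nonneg.2 hq1) (mul_nonneg hcpos.le hα)]
      have h1 : |Real.sign x| * (q * cq q * α) ≤ q * cq q * α :=
        mul_le_of_le_one_left hnn hsign
      rw [mul_min_of_nonneg _ _ (by norm_num : (0:ℝ) ≤ 6)]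
      refine le_trans h1 (le_min ?_ ?_)
      · have : cq q * α ≤ |x| := le_of_lt h
        nlinarith [abs_nonneg x]
      · nlinarith
    · push_neg at h
      rw [sub_zero, mul_min_of_nonneg _ _ (by norm_num : (0:ℝ) ≤ 6)]
      refine le_min (by nlinarith [abs_nonneg x]) ?_
      calc |x| ≤ cq q * α := h
        _ ≤ 6 * α := by nlinarith
  · intro α hα x hx
    rw [rhoHS, if_neg (not_lt.2 hx)]
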